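/- arXiv:2008.07693 — 5 statements merged into one kernel-verified Lean document; each statement's English description precedes it below -/
import Mathlib

section
/- Let A ∈ ℝ^{N×M} with N ≤ M have full row rank, let δ₂ be its 2nd restricted isometry constant, and let λ₁ and λ_N denote the minimum and maximum eigenvalues of A Aᵀ, respectively. Then for all i ≠ j in {1,…,M}, 2(1−δ₂)/λ_N ≤ ‖(A Aᵀ)^{−1/2} A (b_i − b_j)‖₂² ≤ 2(1+δ₂)/λ₁, where b_i and b_j are the i-th and j-th standard basis vectors of ℝ^M. -/
open Matrix

/-- The `s`-th restricted isometry constant `δ_s(A)`: the smallest `δ ≥ 0` such that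
`(1−δ)‖x‖₂² ≤ ‖Ax‖₂² ≤ (1+δ)‖x‖₂²` for all `s`-sparse vectors `x`. -/
noncomputable def ric {N M : ℕ} (A : Matrix (Fin N) (Fin M) ℝ) (s : ℕ) : ℝ :=
  sInf {δ : ℝ | 0 ≤ δ ∧ ∀ x : Fin M → ℝ,
    (Finset.univ.filter fun i => x i ≠ 0).card ≤ s →
      (1 - δ) * (∑ i, x i ^ 2) ≤ (∑ k, A.mulVec x k ^ 2) ∧
      (∑ k, A.mulVec x k ^ 2) ≤ (1 + δ) * (∑ i, x i ^ 2)}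

/-!
Put `x = bᵢ - bⱼ` and `y = A x`. The vector `x` is `2`-sparse with `‖x‖² = 2`, so the restricted
isometry property gives `2(1 - δ₂) ≤ ‖y‖² ≤ 2(1 + δ₂)`. As `B` is symmetric with `B² = (AAᵀ)⁻¹`,
`‖B y‖² = yᵀ (AAᵀ)⁻¹ y`. Full row rank makes the eigenvalues of `AAᵀ` positive, and `(AAᵀ)⁻¹` is
the functional calculus of `t ↦ t⁻¹` at `AAᵀ`, so in the Loewner order
`λ_N⁻¹ ≤ (AAᵀ)⁻¹ ≤ λ₁⁻¹`, whence `‖y‖² / λ_N ≤ yᵀ (AAᵀ)⁻¹ y ≤ ‖y‖² / λ₁`.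
-/

open scoped MatrixOrder

lemma sum_sq_eq_dotProduct_self {R n : Type*} [CommSemiring R] [Fintype n] (v : n → R) :
    ∑ k, v k ^ 2 = v ⬝ᵥ v := by
  simp only [dotProduct, sq]

section
variable {m n : Type*} [Fintype m] [Fintype n]

lemma sum_sq_mulVec_le (A : Matrix m n ℝ) (x : n → ℝ) :
    ∑ k, (A *ᵥ x) k ^ 2 ≤ (∑ k, ∑ l, A k l ^ 2) * ∑ l, x l ^ 2 := by
  rw [Finset.sum_mul]
  exact Finset.sum_le_sum fun k _ => Finset.sum_mul_sq_le_sq_mul_sq _ (A k) x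

lemma sum_sq_mulVec_eq_dotProduct_conjTranspose_mul (B : Matrix m n ℝ) (y : n → ℝ) :
    ∑ k, (B *ᵥ y) k ^ 2 = y ⬝ᵥ ((Bᴴ * B) *ᵥ y) := by
  rw [sum_sq_eq_dotProduct_self, conjTranspose_eq_transpose_of_trivial, ← mulVec_mulVec,
    dotProduct_mulVec y, vecMul_transpose]

variable [DecidableEq n]

lemma card_filter_single_sub_single_ne_zero_le (i j : n) :
    (Finset.univ.filter fun l => (Pi.single i 1 - Pi.single j 1 : n → ℝ) l ≠ 0).card ≤ 2 := by
  refine (Finset.card_le_card (t := {i, j}) fun l hl => ?_).trans Finset.card_le_two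
  by_contra hlij
  simp only [Finset.mem_insert, Finset.mem_singleton, not_or] at hlij
  simp [Pi.single_apply, hlij.1, hlij.2] at hl

lemma sum_sq_single_sub_single {i j : n} (hij : i ≠ j) :
    ∑ l, (Pi.single i 1 - Pi.single j 1 : n → ℝ) l ^ 2 = 2 := by
  rw [sum_sq_eq_dotProduct_self]
  norm_num [dotProduct_sub, hij, hij.symm]

end

namespace Matrix

lemma dotProduct_mulVec_mono {n : Type*} [Fintype n] {A B : Matrix n n ℝ} (h : A ≤ B)
    (v : n → ℝ) : v ⬝ᵥ (A *ᵥ v) ≤ v ⬝ᵥ (B *ᵥ v) := by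
  simpa [sub_mulVec, dotProduct_sub] using (le_iff.mp h).dotProduct_mulVec_nonneg v

namespace IsHermitian

variable {n : Type*} [Fintype n] [DecidableEq n] {M : Matrix n n ℝ}

lemma eigenvalues_ne_zero_of_rank_eq (hM : M.IsHermitian) (h : M.rank = Fintype.card n)
    (k : n) : hM.eigenvalues k ≠ 0 := fun hk =>
  (Fintype.card_subtype_lt (p := fun i => hM.eigenvalues i ≠ 0) (not_not.mpr hk)).ne
    (by rw [← hM.rank_eq_card_non_zero_eigs, h])

lemma inv_eq_cfc_inv (hM : M.IsHermitian) (h : ∀ k, hM.eigenvalues k ≠ 0) :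
    M⁻¹ = cfc (·⁻¹ : ℝ → ℝ) M := by
  have hunit : IsUnit M := spectrum.isUnit_of_zero_notMem ℝ <| by
    rw [hM.spectrum_real_eq_range_eigenvalues]
    rintro ⟨k, hk⟩
    exact h k hk
  rw [nonsing_inv_eq_ringInverse]
  exact (cfc_ringInverse_id (R := ℝ) (a := M) hunit hM).symm

lemma dotProduct_cfc_const_mulVec (hM : M.IsHermitian) (c : ℝ) (v : n → ℝ) :
    v ⬝ᵥ (cfc (fun _ => c) M *ᵥ v) = c * (v ⬝ᵥ v) := by
  have hconst : cfc (fun _ => c) M = algebraMap ℝ _ c := cfc_const c M hM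
  rw [hconst, Algebra.algebraMap_eq_smul_one, smul_mulVec, one_mulVec, dotProduct_smul,
    smul_eq_mul]

lemma cfc_le_cfc (hM : M.IsHermitian) {f g : ℝ → ℝ}
    (hfg : ∀ k, f (hM.eigenvalues k) ≤ g (hM.eigenvalues k)) : cfc f M ≤ cfc g M := by
  refine cfc_mono (fun x hx => ?_) ((finite_real_spectrum (A := M)).continuousOn f)
    ((finite_real_spectrum (A := M)).continuousOn g)
  obtain ⟨k, rfl⟩ := hM.spectrum_real_eq_range_eigenvalues ▸ hx
  exact hfg k

lemma dotProduct_cfc_mulVec_le (hM : M.IsHermitian) {f : ℝ → ℝ} {c : ℝ}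
    (hf : ∀ k, f (hM.eigenvalues k) ≤ c) (v : n → ℝ) :
    v ⬝ᵥ (cfc f M *ᵥ v) ≤ c * (v ⬝ᵥ v) := by
  rw [← hM.dotProduct_cfc_const_mulVec]
  exact dotProduct_mulVec_mono (hM.cfc_le_cfc hf) v

lemma le_dotProduct_cfc_mulVec (hM : M.IsHermitian) {f : ℝ → ℝ} {c : ℝ}
    (hf : ∀ k, c ≤ f (hM.eigenvalues k)) (v : n → ℝ) :
    c * (v ⬝ᵥ v) ≤ v ⬝ᵥ (cfc f M *ᵥ v) := by
  rw [← hM.dotProduct_cfc_const_mulVec]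
  exact dotProduct_mulVec_mono (hM.cfc_le_cfc hf) v

lemma div_le_dotProduct_inv_mulVec (hM : M.IsHermitian) {b : ℝ}
    (hpos : ∀ k, 0 < hM.eigenvalues k) (hb : ∀ k, hM.eigenvalues k ≤ b) (v : n → ℝ) :
    (v ⬝ᵥ v) / b ≤ v ⬝ᵥ (M⁻¹ *ᵥ v) := by
  rw [hM.inv_eq_cfc_inv fun k => (hpos k).ne', div_eq_inv_mul]
  exact hM.le_dotProduct_cfc_mulVec (fun k => inv_anti₀ (hpos k) (hb k)) v

lemma dotProduct_inv_mulVec_le_div (hM : M.IsHermitian) {a : ℝ}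
    (ha : 0 < a) (ha_le : ∀ k, a ≤ hM.eigenvalues k) (v : n → ℝ) :
    v ⬝ᵥ (M⁻¹ *ᵥ v) ≤ (v ⬝ᵥ v) / a := by
  rw [hM.inv_eq_cfc_inv fun k => (ha.trans_le (ha_le k)).ne', div_eq_inv_mul]
  exact hM.dotProduct_cfc_mulVec_le (fun k => inv_anti₀ ha (ha_le k)) v

end IsHermitian

end Matrix

section
variable {N M : ℕ}

def ricAdmissible (A : Matrix (Fin N) (Fin M) ℝ) (s : ℕ) : Set ℝ :=
  {δ : ℝ | 0 ≤ δ ∧ ∀ x : Fin M → ℝ,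
    (Finset.univ.filter fun i => x i ≠ 0).card ≤ s →
      (1 - δ) * (∑ i, x i ^ 2) ≤ (∑ k, A.mulVec x k ^ 2) ∧
      (∑ k, A.mulVec x k ^ 2) ≤ (1 + δ) * (∑ i, x i ^ 2)}

lemma ric_eq_sInf (A : Matrix (Fin N) (Fin M) ℝ) (s : ℕ) :
    ric A s = sInf (ricAdmissible A s) := rfl

lemma one_add_sum_sq_entries_mem_ricAdmissible (A : Matrix (Fin N) (Fin M) ℝ) (s : ℕ) :
    1 + ∑ k, ∑ l, A k l ^ 2 ∈ ricAdmissible A s := by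
  refine ⟨by positivity, fun x _ => ⟨?_, ?_⟩⟩
  · nlinarith [show (0 : ℝ) ≤ ∑ k, ∑ l, A k l ^ 2 by positivity,
      show (0 : ℝ) ≤ ∑ i, x i ^ 2 by positivity,
      show (0 : ℝ) ≤ ∑ k, (A *ᵥ x) k ^ 2 by positivity]
  · nlinarith [sum_sq_mulVec_le A x, show (0 : ℝ) ≤ ∑ i, x i ^ 2 by positivity]

lemma abs_sum_sq_mulVec_sub_le_ric_mul (A : Matrix (Fin N) (Fin M) ℝ) {s : ℕ}
    {x : Fin M → ℝ} (hx : (Finset.univ.filter fun i => x i ≠ 0).card ≤ s) (hx0 : 0 < ∑ i, x i ^ 2) :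
    |∑ k, (A *ᵥ x) k ^ 2 - ∑ i, x i ^ 2| ≤ ric A s * ∑ i, x i ^ 2 := by
  rw [← div_le_iff₀ hx0, ric_eq_sInf]
  refine le_csInf ⟨_, one_add_sum_sq_entries_mem_ricAdmissible A s⟩ fun δ hδ => ?_
  obtain ⟨hlo, hhi⟩ := hδ.2 x hx
  rw [div_le_iff₀ hx0, abs_le]
  constructor <;> linarith

end

theorem stmt_9_general {N M : ℕ}
    (A : Matrix (Fin N) (Fin M) ℝ) (hrank : A.rank = N)
    (hH : (A * Aᵀ).IsHermitian)
    (B : Matrix (Fin N) (Fin N) ℝ) (hBpsd : B.PosSemidef) (hB : B * B = (A * Aᵀ)⁻¹)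
    (lam1 lamN : ℝ)
    (hlam1 : IsLeast (Set.range hH.eigenvalues) lam1)
    (hlamN : IsGreatest (Set.range hH.eigenvalues) lamN)
    (i j : Fin M) (hij : i ≠ j) :
    2 * (1 - ric A 2) / lamN ≤
      ∑ k, B.mulVec (A.mulVec (Pi.single i 1 - Pi.single j 1)) k ^ 2 ∧
    ∑ k, B.mulVec (A.mulVec (Pi.single i 1 - Pi.single j 1)) k ^ 2 ≤
      2 * (1 + ric A 2) / lam1 := by
  set y := A *ᵥ (Pi.single i 1 - Pi.single j 1)
  have hlam1_pos : 0 < lam1 := by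
    obtain ⟨k, rfl⟩ := hlam1.1
    have hpsd : (A * Aᵀ).PosSemidef := by
      simpa only [conjTranspose_eq_transpose_of_trivial] using
        posSemidef_self_mul_conjTranspose A
    refine (hpsd.eigenvalues_nonneg k).lt_of_ne' ?_
    exact hH.eigenvalues_ne_zero_of_rank_eq
      (by rw [rank_self_mul_transpose, hrank, Fintype.card_fin]) k
  have hlam1_le k : lam1 ≤ hH.eigenvalues k := hlam1.2 ⟨k, rfl⟩
  have hle_lamN k : hH.eigenvalues k ≤ lamN := hlamN.2 ⟨k, rfl⟩
  have hlamN_pos : 0 < lamN := hlam1_pos.trans_le (hlam1.2 hlamN.1)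
  have hRIP := abs_sum_sq_mulVec_sub_le_ric_mul A (card_filter_single_sub_single_ne_zero_le i j)
    (by rw [sum_sq_single_sub_single hij]; norm_num)
  rw [sum_sq_single_sub_single hij, abs_le, sum_sq_eq_dotProduct_self y] at hRIP
  rw [sum_sq_mulVec_eq_dotProduct_conjTranspose_mul, hBpsd.isHermitian.eq, hB]
  constructor
  · calc 2 * (1 - ric A 2) / lamN ≤ (y ⬝ᵥ y) / lamN := by gcongr; linarith
      _ ≤ y ⬝ᵥ ((A * Aᵀ)⁻¹ *ᵥ y) := hH.div_le_dotProduct_inv_mulVec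
          (fun k => hlam1_pos.trans_le (hlam1_le k)) hle_lamN y
  · calc y ⬝ᵥ ((A * Aᵀ)⁻¹ *ᵥ y) ≤ (y ⬝ᵥ y) / lam1 :=
          hH.dotProduct_inv_mulVec_le_div hlam1_pos hlam1_le y
      _ ≤ 2 * (1 + ric A 2) / lam1 := by gcongr; linarith

/-- let `A ∈ ℝ^{N×M}` (with `N ≤ M`) have full row rank, let `δ₂` be its
2nd restricted isometry constant, let `λ₁` and `λ_N` be the minimum and maximum
eigenvalues of `A Aᵀ`, and let `B` be the positive semidefinite square root of
`(A Aᵀ)⁻¹` (i.e. `B = (A Aᵀ)^{−1/2}`). Then for all `i ≠ j`,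
`2(1−δ₂)/λ_N ≤ ‖(A Aᵀ)^{−1/2} A (b_i − b_j)‖₂² ≤ 2(1+δ₂)/λ₁`,
where `b_i, b_j` are standard basis vectors of `ℝ^M`. -/
theorem stmt_9 {N M : ℕ} (hN : 0 < N) (hNM : N ≤ M)
    (A : Matrix (Fin N) (Fin M) ℝ) (hrank : A.rank = N)
    (hH : (A * Aᵀ).IsHermitian)
    (B : Matrix (Fin N) (Fin N) ℝ) (hBpsd : B.PosSemidef) (hB : B * B = (A * Aᵀ)⁻¹)
    (lam1 lamN : ℝ)
    (hlam1 : IsLeast (Set.range hH.eigenvalues) lam1)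
    (hlamN : IsGreatest (Set.range hH.eigenvalues) lamN)
    (i j : Fin M) (hij : i ≠ j) :
    2 * (1 - ric A 2) / lamN ≤
      ∑ k, B.mulVec (A.mulVec (Pi.single i 1 - Pi.single j 1)) k ^ 2 ∧
    ∑ k, B.mulVec (A.mulVec (Pi.single i 1 - Pi.single j 1)) k ^ 2 ≤
      2 * (1 + ric A 2) / lam1 :=
  stmt_9_general A hrank hH B hBpsd hB lam1 lamN hlam1 hlamN i j hij
end

section
/- Let M = 2^r be a power of two, let N be a divisor of M−1, set κ = (M−1)/N, and let A ∈ ℝ^{N×M} be the column-normalized group Hadamard matrix built from the unique subgroup {a_1,…,a_N} of order N of 𝔽_{2^r}^×. Then the coherence of A satisfies μ(A) ≤ (1/κ)·((κ−1)·√((1/N)·(κ + 1/N)) + 1/N). -/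
/-!
The inner product of two distinct columns `x, x'` is `η(x + x') / N`, where
`η(y) = ∑_{h ∈ H} (-1)^{Tr(h y)}` is a Gauss period and `x + x' ≠ 0`. Orthogonality of the
additive character gives `∑_y η(y) = 0` and, since `h + h' = 0` only for `h = h'` in
characteristic two, `∑_y η(y)² = N M`. The period is constant on every coset `zH`, so for
`z ≠ 0` the remaining `M - N - 1` points outside `{0} ∪ zH` carry the sums `-N (1 + η(z))` and
`N (M - N - η(z)²)`. Cauchy–Schwarz on these points is a quadratic inequality in `η(z)`, which
solves to the stated bound.
-/

open Matrix

/-- The column-normalized group Hadamard matrix: given elements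
`a : Fin N → 𝔽_{2^r}` (the subgroup elements) and an enumeration
`x : Fin M → 𝔽_{2^r}`, the matrix `A ∈ ℝ^{N×M}` with
`A i j = (−1)^{Tr(a_i x_j)} / √N`, where `Tr : 𝔽_{2^r} → 𝔽_2` is the field trace. -/
noncomputable def groupHadamard (r N M : ℕ) (a : Fin N → GaloisField 2 r)
    (x : Fin M → GaloisField 2 r) : Matrix (Fin N) (Fin M) ℝ :=
  Matrix.of fun i j =>
    (if Algebra.trace (ZMod 2) (GaloisField 2 r) (a i * x j) = 0 then (1 : ℝ) else -1) /
      Real.sqrt N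

/-- The coherence `μ(A)` of a matrix with (unit-norm) columns `a_1,…,a_M`:
`μ(A) = max_{i ≠ j} |a_iᵀ a_j|`. -/
noncomputable def coherence {N M : ℕ} (A : Matrix (Fin N) (Fin M) ℝ) : ℝ :=
  sSup {y : ℝ | ∃ i j : Fin M, i ≠ j ∧ y = |∑ k, A k i * A k j|}

open Finset

section TraceChar

variable (F : Type*) [Field F] [Algebra (ZMod 2) F]

noncomputable def traceChar : AddChar F ℝ where
  toFun t := if Algebra.trace (ZMod 2) F t = 0 then 1 else -1
  map_zero_eq_one' := by simp
  map_add_eq_mul' u v := by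
    rw [map_add]
    obtain h | h := (by decide : ∀ b : ZMod 2, b = 0 ∨ b = 1) (Algebra.trace (ZMod 2) F u) <;>
      obtain h' | h' := (by decide : ∀ c : ZMod 2, c = 0 ∨ c = 1) (Algebra.trace (ZMod 2) F v) <;>
      simp [h, h', CharTwo.add_self_eq_zero]

theorem traceChar_apply (t : F) :
    traceChar F t = if Algebra.trace (ZMod 2) F t = 0 then 1 else -1 := rfl

theorem traceChar_ne_one [Finite F] : traceChar F ≠ 1 := by
  obtain ⟨t, ht⟩ := Algebra.trace_surjective (ZMod 2) F 1
  refine AddChar.ne_one_iff.2 ⟨t, ?_⟩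
  norm_num [traceChar_apply, ht]

end TraceChar

theorem mul_abs_le_of_mul_sq_one_add_le {m n κ s : ℝ} (hn : 0 < n) (hκn : κ * n = m - 1)
    (hκ : 1 ≤ κ) (h : n * (1 + s) ^ 2 ≤ (m - n - s ^ 2) * (m - n - 1)) :
    κ * |s| ≤ (κ - 1) * √m + 1 := by
  have hm : 0 ≤ m := by nlinarith
  have hquad : (1 + s) ^ 2 ≤ (κ - 1) * (m - n - s ^ 2) := by
    refine le_of_mul_le_mul_left ?_ hn
    linear_combination h - (m - n - s ^ 2) * hκn
  have habs : κ * |s| ^ 2 - 2 * |s| + 1 ≤ (κ - 1) * (m - n) := by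
    nlinarith [neg_abs_le s, sq_abs s]
  -- multiplying `habs` by `κ` and using `κ n = m - 1` turns the right side into `(κ - 1)² m`
  have hsq : (κ * |s| - 1) ^ 2 ≤ ((κ - 1) * √m) ^ 2 := by
    rw [mul_pow, Real.sq_sqrt hm]
    nlinarith
  linarith [le_of_sq_le_sq hsq (by positivity)]

section GaussPeriod

variable {F : Type*} [Field F] (ψ : AddChar F ℝ) (H : Subgroup Fˣ) [Fintype H]

noncomputable def gaussPeriod (y : F) : ℝ := ∑ h : H, ψ ((h : Fˣ) * y)

theorem gaussPeriod_zero : gaussPeriod ψ H 0 = Fintype.card H := by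
  simp [gaussPeriod]

theorem gaussPeriod_mul_of_mem {b : Fˣ} (hb : b ∈ H) (y : F) :
    gaussPeriod ψ H (b * y) = gaussPeriod ψ H y :=
  Fintype.sum_equiv (Equiv.mulRight ⟨b, hb⟩) _ _ fun h => by simp [mul_assoc]

variable [Fintype F] [DecidableEq F] {ψ}

theorem sum_gaussPeriod (hψ : ψ ≠ 1) : ∑ y, gaussPeriod ψ H y = 0 := by
  unfold gaussPeriod
  rw [sum_comm]
  refine sum_eq_zero fun h _ => ?_
  simp_rw [mul_comm ((h : Fˣ) : F)]
  simp [AddChar.sum_mulShift _ (.of_ne_one hψ)]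

theorem sum_gaussPeriod_sq [CharP F 2] (hψ : ψ ≠ 1) :
    ∑ y, gaussPeriod ψ H y ^ 2 = Fintype.card H * Fintype.card F := by
  have hpair (h h' : H) : ∑ y, ψ ((h : Fˣ) * y) * ψ ((h' : Fˣ) * y) =
      if h = h' then (Fintype.card F : ℝ) else 0 := by
    simp_rw [← AddChar.map_add_eq_mul ψ, ← add_mul, mul_comm (_ + _),
      AddChar.sum_mulShift _ (.of_ne_one hψ), CharTwo.add_eq_zero, Units.val_inj,
      Subtype.coe_inj, Nat.cast_ite, Nat.cast_zero]
  simp_rw [gaussPeriod, sq, sum_mul_sum]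
  rw [sum_comm]
  simp_rw [sum_comm (s := univ (α := F)), hpair]
  simp

theorem card_mul_sq_one_add_gaussPeriod_le [CharP F 2] (hψ : ψ ≠ 1) {z : F} (hz : z ≠ 0) :
    Fintype.card H * (1 + gaussPeriod ψ H z) ^ 2 ≤
      (Fintype.card F - Fintype.card H - gaussPeriod ψ H z ^ 2) *
        (Fintype.card F - Fintype.card H - 1) := by
  set S := gaussPeriod ψ H
  set n : ℝ := (Fintype.card H : ℝ)
  set m : ℝ := (Fintype.card F : ℝ)
  have hn : 0 < n := Nat.cast_pos.2 Fintype.card_pos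
  have hinj : Function.Injective fun h : H => ((h : Fˣ) : F) * z :=
    (mul_left_injective₀ hz).comp (Units.val_injective.comp Subtype.val_injective)
  set C := univ.image fun h : H => ((h : Fˣ) : F) * z
  have hcardC : #C = Fintype.card H := by rw [card_image_of_injective _ hinj, card_univ]
  have hzero : (0 : F) ∉ C := by simp [C, hz]
  have hsumC (k : ℕ) : ∑ y ∈ C, S y ^ k = n * S z ^ k := by
    simp [C, sum_image hinj.injOn, S, gaussPeriod_mul_of_mem ψ H (SetLike.coe_mem _), n]
  set D := (insert 0 C)ᶜ
  have hsumD (k : ℕ) : ∑ y ∈ D, S y ^ k = ∑ y, S y ^ k - S 0 ^ k - n * S z ^ k := by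
    rw [← sum_compl_add_sum (insert 0 C), sum_insert hzero, hsumC]
    ring
  have hcardD : (#D : ℝ) = m - n - 1 := by
    rw [card_compl, Nat.cast_sub (card_le_univ _), card_insert_of_notMem hzero, hcardC,
      Nat.cast_succ]
    ring
  have hS0 : S 0 = n := gaussPeriod_zero ψ H
  have hsum : ∑ y ∈ D, S y = -(n * (1 + S z)) := by
    have h := hsumD 1
    simp only [pow_one] at h
    rw [h, sum_gaussPeriod H hψ, hS0]
    ring
  have hsum_sq : ∑ y ∈ D, S y ^ 2 = n * (m - n - S z ^ 2) := by
    rw [hsumD 2, sum_gaussPeriod_sq H hψ, hS0]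
    ring
  have hCS := sq_sum_le_card_mul_sum_sq (s := D) (f := S)
  rw [hsum, hsum_sq, hcardD] at hCS
  refine le_of_mul_le_mul_left ?_ hn
  linear_combination hCS

theorem card_subgroup_units_lt : Fintype.card H < Fintype.card F := by
  have := Fintype.card_subtype_le (· ∈ H)
  rw [Fintype.card_units] at this
  have := Fintype.card_pos (α := F)
  omega

theorem abs_gaussPeriod_div_le [CharP F 2] (hψ : ψ ≠ 1) {z : F} (hz : z ≠ 0) {κ : ℝ}
    (hκ : κ = ((Fintype.card F : ℝ) - 1) / Fintype.card H) :
    |gaussPeriod ψ H z| / Fintype.card H ≤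
      1 / κ * ((κ - 1) * √(1 / Fintype.card H * (κ + 1 / Fintype.card H)) +
        1 / Fintype.card H) := by
  have hnm : (Fintype.card H : ℝ) + 1 ≤ Fintype.card F := by
    exact_mod_cast card_subgroup_units_lt H
  set n : ℝ := (Fintype.card H : ℝ)
  set m : ℝ := (Fintype.card F : ℝ)
  have hn : 0 < n := Nat.cast_pos.2 Fintype.card_pos
  have hκn : κ * n = m - 1 := by rw [hκ]; field_simp
  have hκ1 : 1 ≤ κ := by rw [hκ, le_div_iff₀ hn]; linarith
  have hbound : κ * |gaussPeriod ψ H z| ≤ (κ - 1) * √m + 1 := by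
    refine mul_abs_le_of_mul_sq_one_add_le hn hκn hκ1 ?_
    exact card_mul_sq_one_add_gaussPeriod_le H hψ hz
  have hsq : 1 / n * (κ + 1 / n) = (√m / n) ^ 2 := by
    rw [div_pow, Real.sq_sqrt (by positivity)]
    field_simp
    linear_combination hκn
  rw [hsq, Real.sqrt_sq (by positivity),
    show 1 / κ * ((κ - 1) * (√m / n) + 1 / n) = ((κ - 1) * √m + 1) / κ / n by field_simp]
  gcongr
  rw [le_div_iff₀ (by positivity)]
  linarith

end GaussPeriod

theorem sum_comp_eq_sum_subgroup {ι M β : Type*} [Fintype ι] [Monoid M] [DecidableEq M]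
    [AddCommMonoid β] {a : ι → M} (ha : Function.Injective a) (H : Subgroup Mˣ) [Fintype H]
    (hrange : Set.range a = (fun u : Mˣ => (u : M)) '' (H : Set Mˣ)) (f : M → β) :
    ∑ k, f (a k) = ∑ h : H, f (h : Mˣ) := by
  have himage : univ.image a = univ.image fun h : H => ((h : Mˣ) : M) := by
    apply coe_injective
    simp only [coe_image, coe_univ, Set.image_univ, hrange]
    ext y
    simp
  rw [← sum_image ha.injOn, himage]
  exact sum_image fun _ _ _ _ h => Subtype.val_injective (Units.val_injective h)

theorem groupHadamard_mul_groupHadamard {r N M : ℕ} (a : Fin N → GaloisField 2 r)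
    (x : Fin M → GaloisField 2 r) (k : Fin N) (i j : Fin M) :
    groupHadamard r N M a x k i * groupHadamard r N M a x k j =
      traceChar _ (a k * (x i + x j)) / N := by
  rw [mul_add, AddChar.map_add_eq_mul, groupHadamard, of_apply, of_apply, ← traceChar_apply,
    ← traceChar_apply, div_mul_div_comm, Real.mul_self_sqrt N.cast_nonneg]

theorem stmt_11_general {r N M : ℕ}
    (a : Fin N → GaloisField 2 r) (ha_inj : Function.Injective a)
    (H : Subgroup (GaloisField 2 r)ˣ) (hHcard : Nat.card H = N)
    (ha_range : Set.range a =
      (fun u : (GaloisField 2 r)ˣ => (u : GaloisField 2 r)) '' (H : Set (GaloisField 2 r)ˣ))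
    (x : Fin M → GaloisField 2 r) (hx : Function.Bijective x)
    (A : Matrix (Fin N) (Fin M) ℝ) (hA : A = groupHadamard r N M a x)
    (κ : ℝ) (hκ : κ = ((M : ℝ) - 1) / N) :
    coherence A ≤
      (1 / κ) * ((κ - 1) * Real.sqrt ((1 / N) * (κ + 1 / N)) + 1 / N) := by
  classical
  let : Fintype (GaloisField 2 r) := Fintype.ofFinite _
  have hcardF : Fintype.card (GaloisField 2 r) = M := by
    rw [← Fintype.card_of_bijective hx, Fintype.card_fin]
  have hcardH : Fintype.card H = N := by rw [← Nat.card_eq_fintype_card, hHcard]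
  have hbound {z : GaloisField 2 r} (hz : z ≠ 0) :
      |gaussPeriod (traceChar _) H z| / N ≤
        1 / κ * ((κ - 1) * √(1 / N * (κ + 1 / N)) + 1 / N) := by
    have := abs_gaussPeriod_div_le H (traceChar_ne_one _) hz (κ := κ) (by rwa [hcardF, hcardH])
    rwa [hcardH] at this
  have hinner (i j : Fin M) :
      ∑ k, A k i * A k j = gaussPeriod (traceChar _) H (x i + x j) / N := by
    simp_rw [hA, groupHadamard_mul_groupHadamard, ← sum_div]
    rw [sum_comp_eq_sum_subgroup ha_inj H ha_range fun y => traceChar _ (y * (x i + x j))]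
    rfl
  -- `sSup ∅ = 0`, so the bound must be nonnegative: it dominates `|η(1)| / N`
  refine Real.sSup_le ?_ ((div_nonneg (abs_nonneg _) N.cast_nonneg).trans (hbound one_ne_zero))
  rintro _ ⟨i, j, hij, rfl⟩
  rw [hinner, abs_div, Nat.abs_cast]
  exact hbound (by rwa [Ne, CharTwo.add_eq_zero, hx.1.eq_iff])

/-- for `M = 2^r` a power of two, `N` a divisor of `M − 1`, and
`κ = (M−1)/N`, the coherence of the column-normalized group Hadamard matrix
`A ∈ ℝ^{N×M}` built from the unique subgroup `{a_1,…,a_N}` of order `N` of `𝔽_{2^r}ˣ`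
satisfies `μ(A) ≤ (1/κ)·((κ−1)·√((1/N)(κ+1/N)) + 1/N)`. -/
theorem stmt_11 {r N M : ℕ} (hM : M = 2 ^ r) (hNdvd : N ∣ M - 1) (hN : 0 < N)
    (a : Fin N → GaloisField 2 r) (ha_inj : Function.Injective a)
    (H : Subgroup (GaloisField 2 r)ˣ) (hHcard : Nat.card H = N)
    (ha_range : Set.range a =
      (fun u : (GaloisField 2 r)ˣ => (u : GaloisField 2 r)) '' (H : Set (GaloisField 2 r)ˣ))
    (x : Fin M → GaloisField 2 r) (hx : Function.Bijective x)
    (A : Matrix (Fin N) (Fin M) ℝ) (hA : A = groupHadamard r N M a x)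
    (κ : ℝ) (hκ : κ = ((M : ℝ) - 1) / N) :
    coherence A ≤
      (1 / κ) * ((κ - 1) * Real.sqrt ((1 / N) * (κ + 1 / N)) + 1 / N) :=
  stmt_11_general a ha_inj H hHcard ha_range x hx A hA κ hκ
end

section
/- Let M = 2^r be a power of two, let N be a divisor of M−1, and let A ∈ ℝ^{N×M} be the column-normalized group Hadamard matrix built from the unique subgroup {a_1,…,a_N} of order N of 𝔽_{2^r}^×. Then A has unit ℓ₂-norm columns and orthogonal rows, and A Aᵀ = (M/N)·I_N, where I_N is the N×N identity matrix. -/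
/-!
The map `ψ z = (-1) ^ Tr z` is an additive character of `𝔽_{2^r}`, primitive because the trace
form is nondegenerate, and `A i j = ψ (a i * x j) / √N`. Hence
`(A Aᵀ) i i' = N⁻¹ ∑ y, ψ ((a i + a i') * y)`, which is `M / N` if `a i + a i' = 0` and `0`
otherwise; in characteristic `2`, `a i + a i' = 0` means `a i = a i'`. The columns have unit norm
because every entry squares to `1 / N`.
-/

open Matrix

namespace AddChar

theorem IsPrimitive.compAddMonoidHom_trace {K L R : Type*} [Field K] [Field L] [Algebra K L]
    [FiniteDimensional K L] [Algebra.IsSeparable K L] [CommMonoid R] {ψ : AddChar K R}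
    (hψ : ψ.IsPrimitive) :
    (ψ.compAddMonoidHom (Algebra.trace K L).toAddMonoidHom).IsPrimitive := by
  intro a ha hshift
  obtain ⟨b, hb⟩ : ∃ b, Algebra.trace K L (a * b) ≠ 0 := by
    by_contra! h
    exact ha ((traceForm_nondegenerate K L).1 a h)
  refine hψ hb ?_
  ext t
  have htrace :
      Algebra.trace K L (a * (b * algebraMap K L t)) = Algebra.trace K L (a * b) * t := by
    rw [← mul_assoc, mul_comm, ← Algebra.smul_def, map_smul, smul_eq_mul, mul_comm]
  simpa [htrace] using DFunLike.congr_fun hshift (b * algebraMap K L t)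

theorem IsPrimitive.sum_apply_mul_mul_apply_mul {R R' κ : Type*} [CommRing R] [Fintype R]
    [DecidableEq R] [CommRing R'] [IsDomain R'] [Fintype κ] {ψ : AddChar R R'}
    (hψ : ψ.IsPrimitive) {x : κ → R} (hx : Function.Bijective x) (a b : R) :
    ∑ j, ψ (a * x j) * ψ (b * x j) = if a + b = 0 then (Fintype.card R : R') else 0 := by
  simp_rw [← map_add_eq_mul, ← add_mul, mul_comm _ (x _)]
  rw [Fintype.sum_bijective x hx _ (fun y => ψ (y * (a + b))) fun _ => rfl]
  rw [sum_mulShift _ hψ, Nat.cast_ite, Nat.cast_zero]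

end AddChar

noncomputable def signChar : AddChar (ZMod 2) ℝ :=
  AddChar.zmodChar 2 (by norm_num : (-1 : ℝ) ^ 2 = 1)

theorem signChar_apply (s : ZMod 2) : signChar s = if s = 0 then 1 else -1 := by
  rw [signChar, AddChar.zmodChar_apply]
  rcases (by decide : ∀ s : ZMod 2, s = 0 ∨ s = 1) s with rfl | rfl
  · simp
  · simp [ZMod.val_one]

theorem signChar_isPrimitive : signChar.IsPrimitive :=
  AddChar.zmodChar_primitive_of_primitive_root 2 (IsPrimitiveRoot.neg_one 0 (by norm_num))

theorem signChar_mul_self (s : ZMod 2) : signChar s * signChar s = 1 := by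
  rw [← AddChar.map_add_eq_mul, CharTwo.add_self_eq_zero, AddChar.map_zero_eq_one]

section TraceSignChar

variable (F : Type*) [Field F] [Algebra (ZMod 2) F]

noncomputable def traceSignChar : AddChar F ℝ :=
  signChar.compAddMonoidHom (Algebra.trace (ZMod 2) F).toAddMonoidHom

variable {F}

theorem traceSignChar_apply (z : F) :
    traceSignChar F z = if Algebra.trace (ZMod 2) F z = 0 then 1 else -1 :=
  signChar_apply _

theorem traceSignChar_mul_self (z : F) : traceSignChar F z * traceSignChar F z = 1 :=
  signChar_mul_self _

theorem traceSignChar_isPrimitive [Finite F] : (traceSignChar F).IsPrimitive :=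
  signChar_isPrimitive.compAddMonoidHom_trace

theorem sum_traceSignChar_mul_traceSignChar [Finite F] [DecidableEq F] {κ : Type*} [Fintype κ]
    {x : κ → F} (hx : Function.Bijective x) (a b : F) :
    ∑ j, traceSignChar F (a * x j) * traceSignChar F (b * x j) =
      if a = b then (Fintype.card κ : ℝ) else 0 := by
  have : CharP F 2 := charP_of_injective_algebraMap (algebraMap (ZMod 2) F).injective 2
  have : Fintype F := Fintype.ofFinite F
  rw [traceSignChar_isPrimitive.sum_apply_mul_mul_apply_mul hx, Fintype.card_of_bijective hx]
  simp only [CharTwo.add_eq_zero]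

end TraceSignChar

section GroupHadamard

variable {r N M : ℕ} {a : Fin N → GaloisField 2 r} {x : Fin M → GaloisField 2 r}

theorem groupHadamard_apply (i : Fin N) (j : Fin M) :
    groupHadamard r N M a x i j = traceSignChar _ (a i * x j) / √N := by
  rw [traceSignChar_apply]
  rfl

theorem groupHadamard_sq (i : Fin N) (j : Fin M) :
    groupHadamard r N M a x i j ^ 2 = 1 / N := by
  rw [groupHadamard_apply, div_pow, sq, traceSignChar_mul_self, Real.sq_sqrt N.cast_nonneg]

theorem groupHadamard_mul_transpose (ha : Function.Injective a) (hx : Function.Bijective x) :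
    groupHadamard r N M a x * (groupHadamard r N M a x)ᵀ = ((M : ℝ) / N) • 1 := by
  classical
  ext i i'
  simp_rw [mul_apply, transpose_apply, groupHadamard_apply, div_mul_div_comm, ← Finset.sum_div,
    sum_traceSignChar_mul_traceSignChar hx, Real.mul_self_sqrt N.cast_nonneg, ha.eq_iff,
    Fintype.card_fin, Matrix.smul_apply, one_apply, smul_eq_mul]
  split_ifs <;> simp

end GroupHadamard

theorem stmt_12_general {r N M : ℕ} (hN : 0 < N)
    (a : Fin N → GaloisField 2 r) (ha_inj : Function.Injective a)
    (x : Fin M → GaloisField 2 r) (hx : Function.Bijective x)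
    (A : Matrix (Fin N) (Fin M) ℝ) (hA : A = groupHadamard r N M a x) :
    (∀ j, ∑ i, A i j ^ 2 = 1) ∧
    (∀ i i' : Fin N, i ≠ i' → ∑ j, A i j * A i' j = 0) ∧
    A * Aᵀ = ((M : ℝ) / N) • (1 : Matrix (Fin N) (Fin N) ℝ) := by
  subst hA
  have hAAt := groupHadamard_mul_transpose ha_inj hx
  refine ⟨fun j => ?_, fun i i' hii' => ?_, hAAt⟩
  · simp_rw [groupHadamard_sq, Finset.sum_const, Finset.card_univ, Fintype.card_fin, nsmul_eq_mul]
    field_simp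
  · simpa [mul_apply, hii'] using congr_fun₂ hAAt i i'

/-- for `M = 2^r`, `N ∣ M − 1`, the column-normalized group Hadamard
matrix `A ∈ ℝ^{N×M}` built from the unique subgroup `{a_1,…,a_N}` of order `N` of
`𝔽_{2^r}ˣ` has unit `ℓ₂`-norm columns, orthogonal rows, and satisfies
`A Aᵀ = (M/N)·I_N`. -/
theorem stmt_12 {r N M : ℕ} (hM : M = 2 ^ r) (hNdvd : N ∣ M - 1) (hN : 0 < N)
    (a : Fin N → GaloisField 2 r) (ha_inj : Function.Injective a)
    (H : Subgroup (GaloisField 2 r)ˣ) (hHcard : Nat.card H = N)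
    (ha_range : Set.range a =
      (fun u : (GaloisField 2 r)ˣ => (u : GaloisField 2 r)) '' (H : Set (GaloisField 2 r)ˣ))
    (x : Fin M → GaloisField 2 r) (hx : Function.Bijective x)
    (A : Matrix (Fin N) (Fin M) ℝ) (hA : A = groupHadamard r N M a x) :
    (∀ j, ∑ i, A i j ^ 2 = 1) ∧
    (∀ i i' : Fin N, i ≠ i' → ∑ j, A i j * A i' j = 0) ∧
    A * Aᵀ = ((M : ℝ) / N) • (1 : Matrix (Fin N) (Fin N) ℝ) :=
  stmt_12_general hN a ha_inj x hx A hA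
end

section
/- Let p_1,…,p_M be probability density functions on ℝ^N and suppose the observation Ũ is drawn from p_1. Let E = {ũ ∈ ℝ^N : p_j(ũ) ≥ p_1(ũ) for some j ≠ 1} (the event containing every possible error of the maximum-likelihood decoder argmax_j p_j(ũ)). Then for every 0 ≤ ρ ≤ 1, ℙ(Ũ ∈ E) ≤ ∫_{ℝ^N} p_1(ũ)^{1/(1+ρ)} (Σ_{j≠1} p_j(ũ)^{1/(1+ρ)})^ρ dũ. -/
open MeasureTheory

/-! On the error event some `p_j` with `j ≠ 1` dominates `p_1`, so
`Σ_{j≠1} p_j^{1/(1+ρ)} ≥ p_1^{1/(1+ρ)}`; raising to the power `ρ ≥ 0` and multiplying by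
`p_1^{1/(1+ρ)}` gives an integrand that dominates `p_1` on the event, since
`1/(1+ρ) + ρ/(1+ρ) = 1`. Integrating over the event, and then over all of `ℝ^N`, gives the bound. -/

theorem Real.self_le_rpow_mul_rpow_of_rpow_le {x y ρ : ℝ} (hx : 0 ≤ x) (hρ : 0 ≤ ρ)
    (hxy : x ^ (1 / (1 + ρ)) ≤ y) : x ≤ x ^ (1 / (1 + ρ)) * y ^ ρ := by
  set s := 1 / (1 + ρ) with hs
  have hs_add : s + s * ρ = 1 := by rw [hs]; field_simp
  calc x = x ^ s * (x ^ s) ^ ρ := by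
        rw [← Real.rpow_mul hx, ← Real.rpow_add' hx (by rw [hs_add]; norm_num), hs_add,
          Real.rpow_one]
    _ ≤ x ^ s * y ^ ρ := by gcongr

theorem Real.self_le_rpow_mul_sum_rpow_rpow {ι : Type*} {t : Finset ι} {q : ι → ℝ}
    (hq : ∀ i ∈ t, 0 ≤ q i) {x ρ : ℝ} (hx : 0 ≤ x) (hρ : 0 ≤ ρ) {j : ι} (hj : j ∈ t)
    (hxj : x ≤ q j) :
    x ≤ x ^ (1 / (1 + ρ)) * (∑ i ∈ t, q i ^ (1 / (1 + ρ))) ^ ρ := by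
  have hs : 0 ≤ 1 / (1 + ρ) := by positivity
  refine Real.self_le_rpow_mul_rpow_of_rpow_le hx hρ ?_
  calc x ^ (1 / (1 + ρ)) ≤ q j ^ (1 / (1 + ρ)) := by gcongr
    _ ≤ ∑ i ∈ t, q i ^ (1 / (1 + ρ)) :=
      Finset.single_le_sum (fun i hi => Real.rpow_nonneg (hq i hi) _) hj

theorem MeasureTheory.setLIntegral_le_lintegral_of_le {α : Type*} [MeasurableSpace α]
    {μ : Measure α} {s : Set α} {f g : α → ENNReal} (hg : Measurable g)
    (hfg : ∀ x ∈ s, f x ≤ g x) : ∫⁻ x in s, f x ∂μ ≤ ∫⁻ x, g x ∂μ :=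
  (setLIntegral_mono hg hfg).trans (setLIntegral_le_lintegral s g)

theorem stmt_13_general {N M : ℕ} [NeZero M] (p : Fin M → (Fin N → ℝ) → ℝ)
    (hmeas : ∀ j, Measurable (p j)) (hnonneg : ∀ j u, 0 ≤ p j u)
    (ρ : ℝ) (hρ0 : 0 ≤ ρ) :
    (∫⁻ u in {u : Fin N → ℝ | ∃ j, j ≠ 0 ∧ p j u ≥ p 0 u}, ENNReal.ofReal (p 0 u)) ≤
      ∫⁻ u : Fin N → ℝ,
        ENNReal.ofReal
          (p 0 u ^ (1 / (1 + ρ)) *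
            (∑ j ∈ Finset.univ.erase (0 : Fin M), p j u ^ (1 / (1 + ρ))) ^ ρ) := by
  refine setLIntegral_le_lintegral_of_le (by fun_prop) ?_
  rintro u ⟨j, hj, hju⟩
  exact ENNReal.ofReal_le_ofReal <| Real.self_le_rpow_mul_sum_rpow_rpow
    (fun i _ => hnonneg i u) (hnonneg 0 u) hρ0 (Finset.mem_erase.2 ⟨hj, Finset.mem_univ j⟩) hju

/-- Gallager's bound: let `p_1,…,p_M` be probability densities on
`ℝ^N` (w.r.t. Lebesgue measure) and suppose the observation is drawn from `p_1`
(index `0` below plays the role of hypothesis 1). Let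
`E = {ũ : p_j(ũ) ≥ p_1(ũ) for some j ≠ 1}`. Then for every `0 ≤ ρ ≤ 1`,
`ℙ(Ũ ∈ E) ≤ ∫ p_1^{1/(1+ρ)} (Σ_{j≠1} p_j^{1/(1+ρ)})^ρ`. -/
theorem stmt_13 {N M : ℕ} [NeZero M] (p : Fin M → (Fin N → ℝ) → ℝ)
    (hmeas : ∀ j, Measurable (p j)) (hnonneg : ∀ j u, 0 ≤ p j u)
    (hdens : ∀ j, ∫ u, p j u = 1)
    (ρ : ℝ) (hρ0 : 0 ≤ ρ) (hρ1 : ρ ≤ 1) :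
    (∫⁻ u in {u : Fin N → ℝ | ∃ j, j ≠ 0 ∧ p j u ≥ p 0 u}, ENNReal.ofReal (p 0 u)) ≤
      ∫⁻ u : Fin N → ℝ,
        ENNReal.ofReal
          (p 0 u ^ (1 / (1 + ρ)) *
            (∑ j ∈ Finset.univ.erase (0 : Fin M), p j u ^ (1 / (1 + ρ))) ^ ρ) :=
  stmt_13_general p hmeas hnonneg ρ hρ0
end

section
/- Under the Gaussian signal model with M ≥ 2 hypotheses, T observation times, and hypothesis 1 true, the maximum-likelihood detector based on the observation vector (y(1),…,y(T)) and knowledge of the signals has error probability satisfying P*(err) ≤ (M−1)·(1 + SNR/2)^{−T/2}. -/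
/-!
The detector errs only if some wrong hypothesis `j` is at least as close to `y` as the true
one, so a union bound reduces the claim to the pairwise error `P(∑ₜ Dₜ ≤ 0)`, where
`Dₜ = (y(t) - s_j(t))² - z(t)² = (Uₜ + z(t))² - z(t)²` with `Uₜ = s_1(t) - s_j(t) ~ N(0, 2ℰ²)`
independent of `z(t)`. The `Dₜ` are independent across `t`, so the Chernoff bound at
`λ = -1/(4σ²)` gives `P ≤ (E e^{λD})^T`. Integrating out the noise first turns `e^{λD}` into
`e^{-U²/(8σ²)}`, whose Gaussian expectation is `(1 + SNR/2)^{-1/2}`.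
-/

open MeasureTheory ProbabilityTheory Real
open scoped NNReal

lemma exp_mul_add_sq_sub_sq (l u c : ℝ) :
    exp (l * ((u + c) ^ 2 - c ^ 2)) = exp (l * u ^ 2) * exp (2 * l * u * c) := by
  rw [← exp_add]; congr 1; ring

namespace ProbabilityTheory

variable {Ω : Type*} {mΩ : MeasurableSpace Ω} {μ : Measure Ω}

lemma iIndepFun.curry {ι κ β : Type*} [MeasurableSpace β] {X : ι × κ → Ω → β}
    (hX : ∀ p, Measurable (X p)) (h : iIndepFun X μ) :
    iIndepFun (fun i ω j ↦ X (i, j) ω) μ := by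
  have := h.isProbabilityMeasure
  have _ p := Measure.isProbabilityMeasure_map (μ := μ) (hX p).aemeasurable
  have hrow i : μ.map (fun ω j ↦ X (i, j) ω) = Measure.infinitePi fun j ↦ μ.map (X (i, j)) :=
    (h.precomp (Prod.mk_right_injective i)).map_fun_eq_infinitePi_map fun j ↦ hX _
  have hcurry : (fun ω i j ↦ X (i, j) ω) = MeasurableEquiv.curry ι κ β ∘ fun ω p ↦ X p ω := rfl
  rw [iIndepFun_iff_map_fun_eq_infinitePi_map (fun i ↦ by fun_prop), funext hrow, hcurry,
    ← Measure.map_map (by fun_prop) (by fun_prop), h.map_fun_eq_infinitePi_map hX,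
    ← Measure.infinitePi_map_curry fun i j ↦ μ.map (X (i, j))]

lemma iIndepFun.measureReal_sum_nonpos_le {ι : Type*} [Fintype ι] {X : ι → Ω → ℝ}
    (h : iIndepFun X μ) (hX : ∀ i, Measurable (X i)) {t m : ℝ} (ht : t ≤ 0)
    (hint : ∀ i, Integrable (fun ω ↦ exp (t * X i ω)) μ) (hmgf : ∀ i, mgf (X i) μ t = m) :
    μ.real {ω | ∑ i, X i ω ≤ 0} ≤ m ^ Fintype.card ι := by
  have := h.isProbabilityMeasure
  have hchernoff := measure_le_le_exp_mul_mgf (X := ∑ i, X i) 0 ht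
    (h.integrable_exp_mul_sum hX fun i _ ↦ hint i)
  rw [mul_zero, exp_zero, one_mul, h.mgf_sum hX, Finset.prod_congr rfl fun i _ ↦ hmgf i,
    Finset.prod_const, Finset.card_univ] at hchernoff
  simpa only [Finset.sum_apply] using hchernoff

lemma IndepFun.map_sub_gaussianReal {X Y : Ω → ℝ} {m₁ m₂ : ℝ} {v₁ v₂ : ℝ≥0}
    (hXY : IndepFun X Y μ) (hY : Measurable Y) (hlawX : μ.map X = gaussianReal m₁ v₁)
    (hlawY : μ.map Y = gaussianReal m₂ v₂) :
    μ.map (X - Y) = gaussianReal (m₁ - m₂) (v₁ + v₂) := by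
  have hlawY' : μ.map (Neg.neg ∘ Y) = gaussianReal (-m₂) v₂ := by
    rw [← Measure.map_map measurable_neg hY, hlawY, gaussianReal_map_neg]
  rw [sub_eq_add_neg, sub_eq_add_neg]
  exact gaussianReal_add_gaussianReal_of_indepFun (hXY.comp measurable_id measurable_neg) hlawX
    hlawY'

lemma integral_exp_neg_mul_sq_gaussianReal {s : ℝ≥0} {α : ℝ} (hα : 0 < 1 + 2 * α * s) :
    ∫ x, exp (-α * x ^ 2) ∂gaussianReal 0 s = (√(1 + 2 * α * s))⁻¹ := by
  rcases eq_or_ne s 0 with rfl | hs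
  · simp [gaussianReal_zero_var]
  have hs' : (0 : ℝ) < s := by positivity
  have hb : 0 < α + (2 * (s : ℝ))⁻¹ := by
    have : α + (2 * (s : ℝ))⁻¹ = (1 + 2 * α * s) / (2 * s) := by field_simp; ring
    rw [this]; positivity
  have hdens x : gaussianPDFReal 0 s x • exp (-α * x ^ 2) =
      (√(2 * π * s))⁻¹ * exp (-(α + (2 * (s : ℝ))⁻¹) * x ^ 2) := by
    rw [gaussianPDFReal, smul_eq_mul, mul_assoc, ← exp_add]
    congr 2
    field_simp
    ring
  rw [integral_gaussianReal_eq_integral_smul hs]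
  simp_rw [hdens]
  rw [integral_const_mul, integral_gaussian, ← sqrt_inv, ← sqrt_mul (by positivity), ← sqrt_inv]
  congr 1
  field_simp
  ring

section LikelihoodStatistic

variable {v : ℝ≥0}

/- The exponent `-(4v)⁻¹` is the `λ` minimising `λ + 2vλ²`, the coefficient of `u²` left
after integrating out `c ~ N(0, v)`. -/
lemma integral_exp_mul_add_sq_sub_sq_gaussianReal (hv : v ≠ 0) (u : ℝ) :
    ∫ c, exp (-(4 * v : ℝ)⁻¹ * ((u + c) ^ 2 - c ^ 2)) ∂gaussianReal 0 v =
      exp (-(8 * v : ℝ)⁻¹ * u ^ 2) := by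
  have hmgf := congrFun (mgf_id_gaussianReal (μ := 0) (v := v)) (2 * -(4 * v : ℝ)⁻¹ * u)
  simp only [mgf, id] at hmgf
  simp_rw [exp_mul_add_sq_sub_sq, integral_const_mul, hmgf, ← exp_add]
  congr 1
  field_simp
  ring

lemma integrable_exp_mul_add_sq_sub_sq_gaussianReal_prod (s : ℝ≥0) (hv : v ≠ 0) :
    Integrable (fun p : ℝ × ℝ ↦ exp (-(4 * v : ℝ)⁻¹ * ((p.1 + p.2) ^ 2 - p.2 ^ 2)))
      ((gaussianReal 0 s).prod (gaussianReal 0 v)) := by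
  rw [integrable_prod_iff (by fun_prop)]
  refine ⟨ae_of_all _ fun u ↦ ?_, ?_⟩
  · simp_rw [exp_mul_add_sq_sub_sq]
    exact (integrable_exp_mul_gaussianReal _).const_mul _
  · simp_rw [norm_of_nonneg (exp_pos _).le, integral_exp_mul_add_sq_sub_sq_gaussianReal hv]
    refine Integrable.mono' (integrable_const 1) (by fun_prop) (ae_of_all _ fun u ↦ ?_)
    rw [norm_of_nonneg (exp_pos _).le, exp_le_one_iff]
    have : 0 ≤ (8 * v : ℝ)⁻¹ * u ^ 2 := by positivity
    linarith

lemma integral_exp_mul_add_sq_sub_sq_gaussianReal_prod (s : ℝ≥0) (hv : v ≠ 0) :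
    ∫ p, exp (-(4 * v : ℝ)⁻¹ * ((p.1 + p.2) ^ 2 - p.2 ^ 2))
        ∂(gaussianReal 0 s).prod (gaussianReal 0 v) = (√(1 + s / (4 * v)))⁻¹ := by
  have hv' : (0 : ℝ) < v := by positivity
  rw [integral_prod _ (integrable_exp_mul_add_sq_sub_sq_gaussianReal_prod s hv)]
  simp_rw [integral_exp_mul_add_sq_sub_sq_gaussianReal hv]
  rw [integral_exp_neg_mul_sq_gaussianReal (by positivity)]
  congr 2
  field_simp
  ring

lemma IndepFun.mgf_add_sq_sub_sq_gaussianReal [IsFiniteMeasure μ] {U Z : Ω → ℝ} {s : ℝ≥0}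
    (hv : v ≠ 0) (hU : Measurable U) (hZ : Measurable Z) (hUZ : IndepFun U Z μ)
    (hlawU : μ.map U = gaussianReal 0 s) (hlawZ : μ.map Z = gaussianReal 0 v) :
    Integrable (fun ω ↦ exp (-(4 * v : ℝ)⁻¹ * ((U ω + Z ω) ^ 2 - Z ω ^ 2))) μ ∧
      mgf (fun ω ↦ (U ω + Z ω) ^ 2 - Z ω ^ 2) μ (-(4 * v : ℝ)⁻¹) = (√(1 + s / (4 * v)))⁻¹ := by
  have hlaw : μ.map (fun ω ↦ (U ω, Z ω)) = (gaussianReal 0 s).prod (gaussianReal 0 v) := by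
    rw [(indepFun_iff_map_prod_eq_prod_map_map hU.aemeasurable hZ.aemeasurable).mp hUZ,
      hlawU, hlawZ]
  have hf : Measurable fun p : ℝ × ℝ ↦ exp (-(4 * v : ℝ)⁻¹ * ((p.1 + p.2) ^ 2 - p.2 ^ 2)) := by
    fun_prop
  constructor
  · have := integrable_exp_mul_add_sq_sub_sq_gaussianReal_prod s hv
    rwa [← hlaw, integrable_map_measure hf.aestronglyMeasurable (by fun_prop)] at this
  · rw [mgf, ← integral_exp_mul_add_sq_sub_sq_gaussianReal_prod s hv, ← hlaw,
      integral_map (by fun_prop) hf.aestronglyMeasurable]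

end LikelihoodStatistic

end ProbabilityTheory

theorem measureReal_pairwiseError_le {M T : ℕ} {Ω : Type*} [MeasurableSpace Ω] {μ : Measure Ω}
    {w v : ℝ≥0} (hv : v ≠ 0) {s : Fin M → Fin T → Ω → ℝ} {z : Fin T → Ω → ℝ}
    (hs : ∀ i t, Measurable (s i t)) (hz : ∀ t, Measurable (z t))
    (hindep : iIndepFun (Sum.elim (fun p : Fin M × Fin T ↦ s p.1 p.2) z) μ)
    (hgs : ∀ i t, μ.map (s i t) = gaussianReal 0 w) (hgz : ∀ t, μ.map (z t) = gaussianReal 0 v)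
    {i j : Fin M} (hij : i ≠ j) :
    μ.real {ω | ∑ t, (s i t ω + z t ω - s j t ω) ^ 2 ≤ ∑ t, (s i t ω + z t ω - s i t ω) ^ 2} ≤
      (1 + w / v / 2) ^ (-(T : ℝ) / 2) := by
  have := hindep.isProbabilityMeasure
  have hF : ∀ k, Measurable (Sum.elim (fun p : Fin M × Fin T ↦ s p.1 p.2) z k) := by
    rintro (⟨i, t⟩ | t)
    exacts [hs i t, hz t]
  let block : Fin T × Fin 3 → (Fin M × Fin T) ⊕ Fin T :=
    fun p ↦ ![.inl (i, p.1), .inl (j, p.1), .inr p.1] p.2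
  have hblock : block.Injective := by
    rintro ⟨t, k⟩ ⟨t', k'⟩ h
    fin_cases k <;> fin_cases k' <;> simp_all [block, Prod.ext_iff, eq_comm]
  have hindepD : iIndepFun (fun t ω ↦ (s i t ω - s j t ω + z t ω) ^ 2 - z t ω ^ 2) μ :=
    ((hindep.precomp hblock).curry fun _ ↦ hF _).comp
      (fun _ y ↦ (y 0 - y 1 + y 2) ^ 2 - y 2 ^ 2) fun _ ↦ by fun_prop
  have hmgfD t := by
    have hUZ : IndepFun (s i t - s j t) (z t) μ :=
      (hindep.indepFun_prodMk hF (.inl (i, t)) (.inl (j, t)) (.inr t) (by simp) (by simp)).comp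
        (measurable_fst.sub measurable_snd) measurable_id
    have hlawU : μ.map (s i t - s j t) = gaussianReal 0 (w + w) := by
      rw [← sub_zero 0]
      exact (hindep.indepFun (i := .inl (i, t)) (j := .inl (j, t)) (by simpa)).map_sub_gaussianReal
        (hs j t) (hgs i t) (hgs j t)
    exact hUZ.mgf_add_sq_sub_sq_gaussianReal hv ((hs i t).sub (hs j t)) (hz t) hlawU (hgz t)
  have hchernoff := hindepD.measureReal_sum_nonpos_le (fun t ↦ by fun_prop) (by simp)
    (fun t ↦ (hmgfD t).1) (fun t ↦ (hmgfD t).2)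
  have hevent : {ω | ∑ t, (s i t ω + z t ω - s j t ω) ^ 2 ≤ ∑ t, (s i t ω + z t ω - s i t ω) ^ 2}
      = {ω | ∑ t, ((s i t ω - s j t ω + z t ω) ^ 2 - z t ω ^ 2) ≤ 0} := by
    ext ω
    simp only [Set.mem_ofPred_eq, Finset.sum_sub_distrib, sub_nonpos, add_sub_cancel_left,
      sub_add_eq_add_sub]
  have hbound :
      (√(1 + ((w + w : ℝ≥0) : ℝ) / (4 * v)))⁻¹ ^ T = (1 + w / v / 2) ^ (-(T : ℝ) / 2) := by
    rw [sqrt_eq_rpow, ← rpow_neg (by positivity), ← rpow_natCast, ← rpow_mul (by positivity)]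
    congr 1 <;> push_cast <;> ring
  rwa [Fintype.card_fin, hbound, ← hevent] at hchernoff

theorem stmt_18_general {M T : ℕ} [NeZero M]
    (𝓔 σ : ℝ) (hσ : 0 < σ)
    {Ω : Type} [MeasurableSpace Ω] (μ : Measure Ω)
    (s : Fin M → Fin T → Ω → ℝ) (z : Fin T → Ω → ℝ)
    (hmeas_s : ∀ i t, Measurable (s i t)) (hmeas_z : ∀ t, Measurable (z t))
    (hindep : ProbabilityTheory.iIndepFun
      (Sum.elim (fun p : Fin M × Fin T => s p.1 p.2) z) μ)
    (hgs : ∀ i t, Measure.map (s i t) μ = gaussianReal 0 ⟨𝓔 ^ 2, sq_nonneg 𝓔⟩)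
    (hgz : ∀ t, Measure.map (z t) μ = gaussianReal 0 ⟨σ ^ 2, sq_nonneg σ⟩) :
    (μ {ω | ∃ j : Fin M, j ≠ 0 ∧
        ∑ t, (s 0 t ω + z t ω - s j t ω) ^ 2 ≤
          ∑ t, (s 0 t ω + z t ω - s 0 t ω) ^ 2}).toReal ≤
      ((M : ℝ) - 1) * (1 + (𝓔 ^ 2 / σ ^ 2) / 2) ^ (-(T : ℝ) / 2) := by
  have hv : (⟨σ ^ 2, sq_nonneg σ⟩ : ℝ≥0) ≠ 0 := fun h ↦
    (pow_pos hσ 2).ne' (congrArg NNReal.toReal h)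
  have hevent : {ω | ∃ j : Fin M, j ≠ 0 ∧
      ∑ t, (s 0 t ω + z t ω - s j t ω) ^ 2 ≤ ∑ t, (s 0 t ω + z t ω - s 0 t ω) ^ 2} =
      ⋃ j ∈ Finset.univ.erase 0,
        {ω | ∑ t, (s 0 t ω + z t ω - s j t ω) ^ 2 ≤ ∑ t, (s 0 t ω + z t ω - s 0 t ω) ^ 2} := by
    ext ω
    simp
  calc μ.real _ ≤ ∑ j ∈ Finset.univ.erase 0,
        μ.real {ω | ∑ t, (s 0 t ω + z t ω - s j t ω) ^ 2 ≤ ∑ t, (s 0 t ω + z t ω - s 0 t ω) ^ 2} :=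
        hevent ▸ measureReal_biUnion_finset_le _ _
    _ ≤ ∑ j ∈ Finset.univ.erase (0 : Fin M), (1 + (𝓔 ^ 2 / σ ^ 2) / 2) ^ (-(T : ℝ) / 2) :=
        Finset.sum_le_sum fun j hj ↦ measureReal_pairwiseError_le hv hmeas_s hmeas_z hindep hgs hgz
          (Finset.ne_of_mem_erase hj).symm
    _ = ((M : ℝ) - 1) * (1 + (𝓔 ^ 2 / σ ^ 2) / 2) ^ (-(T : ℝ) / 2) := by
        rw [Finset.sum_const, Finset.card_erase_of_mem (Finset.mem_univ _), Finset.card_univ,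
          Fintype.card_fin, nsmul_eq_mul, Nat.cast_pred (Nat.pos_of_neZero M)]

/-- in the Gaussian signal model with `M ≥ 2` hypotheses and `T`
observation times (signals `s i t` i.i.d. `N(0, ℰ²)`, noise `z t` i.i.d. `N(0, σ²)`,
all independent), with hypothesis 1 (index `0`) true, the maximum-likelihood
detector based on `y(t) = s_1(t) + z(t)` and knowledge of the signals (i.e. nearest
signal in Euclidean distance, ties broken against hypothesis 1) has error
probability at most `(M−1)(1 + SNR/2)^{−T/2}` with `SNR = ℰ²/σ²`. -/
theorem stmt_18 {M T : ℕ} (hM : 2 ≤ M) [NeZero M]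
    (𝓔 σ : ℝ) (h𝓔 : 0 < 𝓔) (hσ : 0 < σ)
    {Ω : Type} [MeasurableSpace Ω] (μ : Measure Ω) [IsProbabilityMeasure μ]
    (s : Fin M → Fin T → Ω → ℝ) (z : Fin T → Ω → ℝ)
    (hmeas_s : ∀ i t, Measurable (s i t)) (hmeas_z : ∀ t, Measurable (z t))
    (hindep : ProbabilityTheory.iIndepFun
      (Sum.elim (fun p : Fin M × Fin T => s p.1 p.2) z) μ)
    (hgs : ∀ i t, Measure.map (s i t) μ = gaussianReal 0 ⟨𝓔 ^ 2, sq_nonneg 𝓔⟩)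
    (hgz : ∀ t, Measure.map (z t) μ = gaussianReal 0 ⟨σ ^ 2, sq_nonneg σ⟩) :
    (μ {ω | ∃ j : Fin M, j ≠ 0 ∧
        ∑ t, (s 0 t ω + z t ω - s j t ω) ^ 2 ≤
          ∑ t, (s 0 t ω + z t ω - s 0 t ω) ^ 2}).toReal ≤
      ((M : ℝ) - 1) * (1 + (𝓔 ^ 2 / σ ^ 2) / 2) ^ (-(T : ℝ) / 2) :=
  stmt_18_general 𝓔 σ hσ μ s z hmeas_s hmeas_z hindep hgs hgz
end
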